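/- The map that inserts a new minimum element in the second position (i.e. sends τ of length n−1 to π of length n with π(2)=1, π(1)=τ(1)+1, and π(i+1)=τ(i)+1 for i ≥ 2) is a bijection between 231-avoiding permutations of length n−1 and 231-avoiding permutations π of length n satisfying π(1) > π(2) and π(2) < π(3), for n ≥ 3. -/

import Mathlib

/-! Inserting a new minimum at position 1 or 2 (in one-line notation) cannot create a 231: the
minimum could only play the role of the `1`, which needs two entries before it. Conversely,
deleting an entry keeps a permutation 231-avoiding, so insertion there is a bijection onto the
231-avoiders whose value at that position is 1. Finally, in a 231-avoider the ascent
`π(2) < π(3)` forces every later value above `π(2)`, so `π(1) > π(2) < π(3)` says exactly that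
`π(2) = 1`. -/

def Avoids231 {n : ℕ} (π : Fin n → Fin n) : Prop :=
  ¬ ∃ i j k : Fin n, i < j ∧ j < k ∧ π k < π i ∧ π i < π j

/-- Insert a new minimum element in second position:
π(1) = τ(1) + 1, π(2) = 1 and π(i+1) = τ(i) + 1 for i ≥ 2. -/
def insertMinSecond {n : ℕ} (τ : Fin (n + 1) → Fin (n + 1)) :
    Fin (n + 2) → Fin (n + 2) :=
  fun i => Fin.cases ((τ 0).succ) (fun j => if j = 0 then 0 else (τ j).succ) i

open Function Fin

theorem Fin.insertNth_injective {α : Type*} {n : ℕ} {p : Fin (n + 1)} {x : α} {f : Fin n → α}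
    (hx : x ∉ Set.range f) (hf : Injective f) : Injective (insertNth p x f) := by
  intro i j hij
  induction i using succAboveCases p <;> induction j using succAboveCases p <;>
    simp only [insertNth_apply_same, insertNth_apply_succAbove] at hij
  · rfl
  · exact absurd ⟨_, hij.symm⟩ hx
  · exact absurd ⟨_, hij⟩ hx
  · rw [hf hij]

theorem Avoids231.of_comp_eq_comp {m k : ℕ} {σ : Fin m → Fin m} {τ : Fin k → Fin k}
    {e v : Fin k → Fin m} (he : StrictMono e) (hv : StrictMono v) (h : ∀ i, σ (e i) = v (τ i))
    (hσ : Avoids231 σ) : Avoids231 τ := by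
  rintro ⟨i, j, k, hij, hjk, hki, hij'⟩
  exact hσ ⟨e i, e j, e k, he hij, he hjk, by simpa only [h, hv.lt_iff_lt],
    by simpa only [h, hv.lt_iff_lt]⟩

theorem Avoids231.apply_le_of_lt_of_lt {m : ℕ} {σ : Fin m → Fin m} (hσ : Avoids231 σ)
    {i j k : Fin m} (hij : i < j) (hjk : j < k) (h : σ i < σ j) : σ i ≤ σ k :=
  not_lt.mp fun hki => hσ ⟨i, j, k, hij, hjk, hki, h⟩

section insertMinAt

variable {m : ℕ} {p : Fin (m + 1)} {τ : Fin m → Fin m}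

def insertMinAt (p : Fin (m + 1)) (τ : Fin m → Fin m) : Fin (m + 1) → Fin (m + 1) :=
  insertNth p 0 (succ ∘ τ)

@[simp]
theorem insertMinAt_apply_same : insertMinAt p τ p = 0 := insertNth_apply_same ..

@[simp]
theorem insertMinAt_apply_succAbove (i : Fin m) : insertMinAt p τ (p.succAbove i) = (τ i).succ :=
  insertNth_apply_succAbove ..

theorem avoids231_insertMinAt_iff (hp : (p : ℕ) ≤ 1) :
    Avoids231 (insertMinAt p τ) ↔ Avoids231 τ := by
  refine ⟨.of_comp_eq_comp (strictMono_succAbove p) strictMono_succ insertMinAt_apply_succAbove,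
    fun hτ ⟨i, j, k, hij, hjk, hki, hij'⟩ => ?_⟩
  have hk : k ≠ p := by rintro rfl; omega
  have hi : i ≠ p := by rintro rfl; simp at hki
  have hj : j ≠ p := by rintro rfl; simp at hij'
  obtain ⟨i, rfl⟩ := exists_succAbove_eq hi
  obtain ⟨j, rfl⟩ := exists_succAbove_eq hj
  obtain ⟨k, rfl⟩ := exists_succAbove_eq hk
  simp only [insertMinAt_apply_succAbove, succ_lt_succ_iff, succAbove_lt_succAbove_iff] at *
  exact hτ ⟨i, j, k, hij, hjk, hki, hij'⟩

theorem insertMinAt_injective : Injective (insertMinAt (m := m) p) :=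
  (insertNth_right_injective _).comp (succ_injective _).comp_left

theorem injective_insertMinAt_iff : Injective (insertMinAt p τ) ↔ Injective τ := by
  refine ⟨fun h i j hij => succAbove_right_injective (p := p) (h ?_), fun hτ => ?_⟩
  · simp only [insertMinAt_apply_succAbove, hij]
  · exact insertNth_injective (by simp) ((succ_injective _).comp hτ)

theorem exists_insertMinAt_eq {π : Fin (m + 1) → Fin (m + 1)} (hπ : Injective π) (hp : π p = 0) :
    ∃ τ, insertMinAt p τ = π := by
  have (i : Fin m) : ∃ j, succ j = π (p.succAbove i) :=
    exists_succ_eq.mpr (hp ▸ hπ.ne (succAbove_ne p i))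
  choose τ hτ using this
  exact ⟨τ, (eq_insertNth_iff.mpr ⟨hp, funext fun i => (hτ i).symm⟩).symm⟩

theorem bijOn_insertMinAt (hp : (p : ℕ) ≤ 1) :
    Set.BijOn (insertMinAt p) {τ | Bijective τ ∧ Avoids231 τ}
      {π | (Bijective π ∧ Avoids231 π) ∧ π p = 0} := by
  refine ⟨fun τ ⟨hτ, hav⟩ => ⟨⟨?_, (avoids231_insertMinAt_iff hp).mpr hav⟩,
    insertMinAt_apply_same⟩, insertMinAt_injective.injOn, fun π ⟨⟨hπ, hav⟩, hp0⟩ => ?_⟩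
  · exact Finite.injective_iff_bijective.mp (injective_insertMinAt_iff.mpr hτ.1)
  · obtain ⟨τ, rfl⟩ := exists_insertMinAt_eq hπ.1 hp0
    exact ⟨τ, ⟨Finite.injective_iff_bijective.mp (injective_insertMinAt_iff.mp hπ.1),
      (avoids231_insertMinAt_iff hp).mp hav⟩, rfl⟩

end insertMinAt

theorem insertMinSecond_eq_insertMinAt {n : ℕ} :
    (insertMinSecond : (Fin (n + 1) → Fin (n + 1)) → _) = insertMinAt 1 := by
  funext τ
  refine eq_insertNth_iff.mpr ⟨rfl, funext fun i => ?_⟩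
  cases i using Fin.cases <;> simp [removeNth, insertMinSecond]

theorem Avoids231.apply_one_eq_zero_iff {n : ℕ} {σ : Fin (n + 3) → Fin (n + 3)}
    (hσ : Avoids231 σ) (hbij : Bijective σ) : σ 1 = 0 ↔ σ 1 < σ 0 ∧ σ 1 < σ 2 := by
  have h12 : (1 : Fin (n + 3)) < 2 := by simp only [lt_def, val_one, val_two]; omega
  constructor
  · intro h1
    have (i : Fin (n + 3)) (hi : i ≠ 1) : σ 1 < σ i :=
      h1 ▸ Fin.pos_iff_ne_zero.mpr (h1 ▸ hbij.1.ne hi)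
    exact ⟨this 0 (by simp), this 2 h12.ne'⟩
  · rintro ⟨h0, h2⟩
    have hmin (i : Fin (n + 3)) : σ 1 ≤ σ i := by
      rcases lt_trichotomy i 2 with hi | rfl | hi
      · obtain rfl | rfl : i = 0 ∨ i = 1 := by
          simp only [Fin.ext_iff, lt_def, val_two, val_one, val_zero] at hi ⊢; omega
        exacts [h0.le, le_rfl]
      · exact h2.le
      · exact hσ.apply_le_of_lt_of_lt h12 hi h2
    obtain ⟨i, hi⟩ := hbij.2 0
    exact le_antisymm (hi ▸ hmin i) (zero_le _)

theorem insertMinSecond_bijOn (n : ℕ) (hn : 1 ≤ n) :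
    Set.BijOn insertMinSecond
      {τ : Fin (n + 1) → Fin (n + 1) | Function.Bijective τ ∧ Avoids231 τ}
      {π : Fin (n + 2) → Fin (n + 2) | Function.Bijective π ∧ Avoids231 π ∧
        π ⟨1, by omega⟩ < π ⟨0, by omega⟩ ∧ π ⟨1, by omega⟩ < π ⟨2, by omega⟩} := by
  obtain ⟨n, rfl⟩ := Nat.exists_eq_add_of_le' hn
  have h := bijOn_insertMinAt (m := n + 2) (p := 1) (Fin.val_one n).le
  rw [insertMinSecond_eq_insertMinAt]
  refine ⟨fun τ hτ => ?_, h.injOn, fun π ⟨hbij, hπ, h0, h2⟩ =>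
    h.surjOn ⟨⟨hbij, hπ⟩, (hπ.apply_one_eq_zero_iff hbij).mpr ⟨h0, h2⟩⟩⟩
  obtain ⟨⟨hbij, hπ⟩, h1⟩ := h.mapsTo hτ
  exact ⟨hbij, hπ, (hπ.apply_one_eq_zero_iff hbij).mp h1⟩
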